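/- Let j be an integer with j ≥ 1 or j ≤ −2, let ε ∈ {1, −1}, and set p = 22j² + 13j + 2, a = ε·(11j + 3), and X = 22j² + 4j − 1 if j ≥ 1, X = 22j² + 22j + 5 if j ≤ −2. Then 1 − a − a² ≢ X·a (mod p). -/

import Mathlib

/-!
In each of the four cases (sign of `j`, sign of `ε`) the difference `X·a − (1 − a − a²)`
is `p` times a linear polynomial in `j` plus a nonzero remainder linear in `j`, which is
smaller than `p` in absolute value and hence not divisible by `p`.
-/

theorem Int.not_modEq_of_sub_eq_mul_add {x y p q r : ℤ} (h : y - x = p * q + r)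
    (hr : r ≠ 0) (hrp : |r| < p) : ¬ x ≡ y [ZMOD p] := by
  intro hxy
  have hpr : p ∣ r := by
    have := hxy.dvd
    rwa [h, dvd_add_right (dvd_mul_right p q)] at this
  exact hr (Int.eq_zero_of_abs_lt_dvd hpr hrp)

/-- Type X Berge knots: for `j ≥ 1` or `j ≤ −2`, `ε ∈ {1,−1}`, `p = 22j² + 13j + 2`,
`a = ε·(11j + 3)`, and `X = 22j² + 4j − 1` if `j ≥ 1`, `X = 22j² + 22j + 5` if `j ≤ −2`,
we have `1 − a − a² ≢ X·a (mod p)`. -/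
theorem stmt_15 (j ε p a X : ℤ) (hj : 1 ≤ j ∨ j ≤ -2) (hε : ε = 1 ∨ ε = -1)
    (hp : p = 22 * j ^ 2 + 13 * j + 2) (ha : a = ε * (11 * j + 3))
    (hX1 : 1 ≤ j → X = 22 * j ^ 2 + 4 * j - 1)
    (hX2 : j ≤ -2 → X = 22 * j ^ 2 + 22 * j + 5) :
    ¬ (1 - a - a ^ 2 ≡ X * a [ZMOD p]) := by
  subst hp ha
  rcases hj with hj | hj
  · rw [hX1 hj]
    rcases hε with rfl | rfl
    · exact Int.not_modEq_of_sub_eq_mul_add (q := 11 * j + 4) (r := 4 * j) (by ring)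
        (by omega) (abs_lt.2 ⟨by nlinarith, by nlinarith⟩)
    · exact Int.not_modEq_of_sub_eq_mul_add (q := -(11 * j - 7)) (r := -(15 * j + 6))
        (by ring) (by omega) (abs_lt.2 ⟨by nlinarith, by nlinarith⟩)
  · rw [hX2 hj]
    rcases hε with rfl | rfl
    · exact Int.not_modEq_of_sub_eq_mul_add (q := 11 * j + 13) (r := 7 * j) (by ring)
        (by omega) (abs_lt.2 ⟨by nlinarith, by nlinarith⟩)
    · exact Int.not_modEq_of_sub_eq_mul_add (q := -11 * j - 2) (r := -18 * j - 6)
        (by ring) (by omega) (abs_lt.2 ⟨by nlinarith, by nlinarith⟩)
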